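/- arXiv:math/0603199 — 4 statements merged into one kernel-verified Lean document; each statement's English description precedes it below -/
import Mathlib

section
/- Let V_1,…,V_d be real n×n matrices, let x, ρ : [0,T] → ℝ^d be continuously differentiable, and let Y : ℝ × [0,T] → M_n(ℝ) be such that for every ε ∈ ℝ: Y(ε, 0) = I, the map t ↦ Y(ε,t) is continuous, and for every t ∈ [0,T], ∂_t Y(ε,t) = Y(ε,t)·( Σ_{k=1}^d ((x^k)′(t) + ε (ρ^k)′(t)) V_k ). Write y(t) := Y(0,t) (so each y(s) is invertible). Then for every t ∈ [0,T], the map ε ↦ Y(ε,t) is differentiable at ε = 0 with derivative ( ∫_0^t y(s)·( Σ_{k=1}^d (ρ^k)′(s) V_k )·y(s)⁻¹ ds ) · y(t). -/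
/-!
With `y = Y 0`, `A = ∑ₖ (xᵏ)' Vₖ` and `R = ∑ₖ (ρᵏ)' Vₖ`, the claimed derivative
`ψ t = (∫₀ᵗ y R y⁻¹) y t` solves the linearized equation `ψ' = y R + ψ A`, `ψ 0 = 0`.
Both `Y ε - y` and `Y ε - y - ε ψ` vanish at `0` and solve equations `f' = f B + g` whose
forcing terms are `ε y R = O(ε)` and `ε (Y ε - y) R = O(ε²)` respectively, so Grönwall's
inequality gives `Y ε t - y t - ε ψ t = O(ε²)`. Invertibility of `y t` is backward uniqueness:
if `u y t = 0`, then `u y` solves `φ' = φ A` and vanishes at `t`, so `u = u y 0 = 0`.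
-/

attribute [local instance] Matrix.normedAddCommGroup Matrix.normedSpace

open Set Filter Topology Asymptotics

theorem gronwallBound_δ0 (K ε x : ℝ) :
    gronwallBound 0 K ε x = ε * gronwallBound 0 K 1 x := by
  by_cases hK : K = 0
  · simp [gronwallBound_K0, hK]
  · simp only [gronwallBound_of_K_ne_0 hK]
    ring

theorem hasDerivAt_of_norm_sub_sub_le_sq {E : Type*} [NormedAddCommGroup E] [NormedSpace ℝ E]
    {f : ℝ → E} {f' : E} {x C : ℝ}
    (h : ∀ᶠ y in 𝓝 x, ‖f y - f x - (y - x) • f'‖ ≤ C * (y - x) ^ 2) : HasDerivAt f f' x := by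
  have hsq : (fun y => (y - x) ^ 2) =o[𝓝 x] fun y => y - x :=
    (isLittleO_pow_id one_lt_two).comp_tendsto (tendsto_sub_nhds_zero_iff.2 tendsto_id)
  refine hasDerivAt_iff_isLittleO.2 ((IsBigO.of_bound C ?_).trans_isLittleO hsq)
  filter_upwards [h] with y hy
  simpa [Real.norm_eq_abs] using hy

section NormedRing

variable {𝔸 : Type*} [NormedRing 𝔸] [NormedAlgebra ℝ 𝔸]

theorem norm_le_mul_gronwallBound_of_hasDerivWithinAt_mul_add {f A g : ℝ → 𝔸} {K c a b : ℝ}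
    (hf : ∀ s ∈ Icc a b, HasDerivWithinAt f (f s * A s + g s) (Icc a b) s)
    (hA : ∀ s ∈ Icc a b, ‖A s‖ ≤ K) (hg : ∀ s ∈ Icc a b, ‖g s‖ ≤ c) (ha : f a = 0) :
    ∀ t ∈ Icc a b, ‖f t‖ ≤ c * gronwallBound 0 K 1 (b - a) := by
  intro t ht
  have ha' : a ∈ Icc a b := left_mem_Icc.2 (ht.1.trans ht.2)
  have hK : 0 ≤ K := (norm_nonneg _).trans (hA a ha')
  have hc : 0 ≤ c := (norm_nonneg _).trans (hg a ha')
  have hderiv_bound : ∀ s ∈ Ico a b, ‖f s * A s + g s‖ ≤ K * ‖f s‖ + c := fun s hs =>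
    have hs' := Ico_subset_Icc_self hs
    calc ‖f s * A s + g s‖ ≤ ‖f s‖ * ‖A s‖ + ‖g s‖ := norm_add_le_of_le (norm_mul_le _ _) le_rfl
      _ ≤ K * ‖f s‖ + c := by nlinarith [hA s hs', hg s hs', norm_nonneg (f s)]
  calc ‖f t‖ ≤ gronwallBound 0 K c (t - a) :=
        norm_le_gronwallBound_of_norm_deriv_right_le (fun s hs => (hf s hs).continuousWithinAt)
          (fun s hs => (hf s (Ico_subset_Icc_self hs)).mono_of_mem_nhdsWithin
            (Icc_mem_nhdsGE_of_mem hs))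
          (by simp [ha]) hderiv_bound t ht
    _ = c * gronwallBound 0 K 1 (t - a) := gronwallBound_δ0 K c _
    _ ≤ c * gronwallBound 0 K 1 (b - a) := by
        gcongr
        exact gronwallBound_mono le_rfl zero_le_one hK (by linarith [ht.2])

theorem mul_eq_zero_of_hasDerivWithinAt_mul {y A : ℝ → 𝔸} {a b t : ℝ}
    (hy : ∀ s ∈ Icc a b, HasDerivWithinAt y (y s * A s) (Icc a b) s)
    (hA : ContinuousOn A (Icc a b)) (ht : t ∈ Icc a b) {u : 𝔸} (hu : u * y t = 0) :
    u * y a = 0 := by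
  obtain ⟨K, hK⟩ := isCompact_Icc.exists_bound_of_continuousOn hA
  have hsub : Icc a t ⊆ Icc a b := Icc_subset_Icc_right ht.2
  have hsub' : Ioc a t ⊆ Icc a b := Ioc_subset_Icc_self.trans hsub
  have hlip : ∀ s ∈ Ioc a t, LipschitzOnWith K.toNNReal (fun φ : 𝔸 => φ * A s) univ := by
    intro s hs
    refine (LipschitzWith.of_dist_le_mul fun φ ψ => ?_).lipschitzOnWith
    rw [dist_eq_norm, dist_eq_norm, ← sub_mul, Real.coe_toNNReal', mul_comm]
    exact (norm_mul_le _ _).trans (by gcongr; exact (hK s (hsub' hs)).trans (le_max_left _ _))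
  have hderiv : ∀ s ∈ Ioc a t,
      HasDerivWithinAt (fun r => u * y r) (u * y s * A s) (Iic s) s := fun s hs => by
    rw [mul_assoc]
    exact ((hy s (hsub' hs)).const_mul u).mono_of_mem_nhdsWithin
      (Icc_mem_nhdsLE_of_mem ⟨hs.1, hs.2.trans ht.2⟩)
  have hzero : ∀ s ∈ Ioc a t, HasDerivWithinAt (fun _ => (0 : 𝔸)) (0 * A s) (Iic s) s :=
    fun s _ => by simpa using hasDerivWithinAt_const s _ (0 : 𝔸)
  exact ODE_solution_unique_of_mem_Icc_left hlip
    (fun s hs => ((hy s (hsub hs)).continuousWithinAt.mono hsub).const_mul u) hderiv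
    (fun _ _ => mem_univ _) continuousOn_const hzero (fun _ _ => mem_univ _) hu
    (left_mem_Icc.2 ht.1)

variable {A R : ℝ → 𝔸} {Y : ℝ → ℝ → 𝔸} {T : ℝ}

theorem exists_norm_perturbed_sub_le_mul_abs
    (hA : ContinuousOn A (Icc 0 T)) (hR : ContinuousOn R (Icc 0 T))
    (hY0 : ∀ ε, Y ε 0 = Y 0 0)
    (hY : ∀ ε, ∀ s ∈ Icc 0 T, HasDerivWithinAt (Y ε) (Y ε s * (A s + ε • R s)) (Icc 0 T) s) :
    ∃ C, ∀ ε, |ε| ≤ 1 → ∀ s ∈ Icc 0 T, ‖Y ε s - Y 0 s‖ ≤ C * |ε| := by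
  obtain ⟨MA, hMA⟩ := isCompact_Icc.exists_bound_of_continuousOn hA
  obtain ⟨MR, hMR⟩ := isCompact_Icc.exists_bound_of_continuousOn hR
  have hy : ContinuousOn (Y 0) (Icc 0 T) := fun s hs => (hY 0 s hs).continuousWithinAt
  obtain ⟨M, hM⟩ := isCompact_Icc.exists_bound_of_continuousOn (hy.mul hR)
  refine ⟨M * gronwallBound 0 (MA + MR) 1 (T - 0), fun ε hε s hs => ?_⟩
  have hderiv : ∀ s ∈ Icc 0 T, HasDerivWithinAt (fun r => Y ε r - Y 0 r)
      ((Y ε s - Y 0 s) * (A s + ε • R s) + ε • (Y 0 s * R s)) (Icc 0 T) s := fun s hs => by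
    refine ((hY ε s hs).sub (hY 0 s hs)).congr_deriv ?_
    simp only [zero_smul, add_zero, sub_mul, mul_add, mul_smul_comm, smul_sub]
    abel
  have hbound : ∀ s ∈ Icc 0 T, ‖A s + ε • R s‖ ≤ MA + MR := fun s hs =>
    calc ‖A s + ε • R s‖ ≤ ‖A s‖ + |ε| * ‖R s‖ := by
          simpa [norm_smul] using norm_add_le (A s) (ε • R s)
      _ ≤ MA + MR := by nlinarith [hMA s hs, hMR s hs, abs_nonneg ε, norm_nonneg (R s)]
  have hforce : ∀ s ∈ Icc 0 T, ‖ε • (Y 0 s * R s)‖ ≤ |ε| * M := fun s hs => by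
    rw [norm_smul, Real.norm_eq_abs]
    exact mul_le_mul_of_nonneg_left (hM s hs) (abs_nonneg ε)
  have := norm_le_mul_gronwallBound_of_hasDerivWithinAt_mul_add hderiv hbound hforce
    (by simp [hY0 ε]) s hs
  linarith

theorem hasDerivAt_perturbed_of_linearized {ψ : ℝ → 𝔸} {t : ℝ}
    (hA : ContinuousOn A (Icc 0 T)) (hR : ContinuousOn R (Icc 0 T))
    (hY0 : ∀ ε, Y ε 0 = Y 0 0)
    (hY : ∀ ε, ∀ s ∈ Icc 0 T, HasDerivWithinAt (Y ε) (Y ε s * (A s + ε • R s)) (Icc 0 T) s)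
    (hψ0 : ψ 0 = 0)
    (hψ : ∀ s ∈ Icc 0 T, HasDerivWithinAt ψ (Y 0 s * R s + ψ s * A s) (Icc 0 T) s)
    (ht : t ∈ Icc 0 T) :
    HasDerivAt (fun ε => Y ε t) (ψ t) 0 := by
  obtain ⟨C, hC⟩ := exists_norm_perturbed_sub_le_mul_abs hA hR hY0 hY
  obtain ⟨MA, hMA⟩ := isCompact_Icc.exists_bound_of_continuousOn hA
  obtain ⟨MR, hMR⟩ := isCompact_Icc.exists_bound_of_continuousOn hR
  have hsecond : ∀ ε, |ε| ≤ 1 →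
      ‖Y ε t - Y 0 t - ε • ψ t‖ ≤ C * MR * gronwallBound 0 MA 1 (T - 0) * ε ^ 2 := by
    intro ε hε
    have hderiv : ∀ s ∈ Icc 0 T, HasDerivWithinAt (fun r => Y ε r - Y 0 r - ε • ψ r)
        ((Y ε s - Y 0 s - ε • ψ s) * A s + ε • ((Y ε s - Y 0 s) * R s)) (Icc 0 T) s :=
      fun s hs => by
        refine (((hY ε s hs).sub (hY 0 s hs)).sub ((hψ s hs).const_smul ε)).congr_deriv ?_
        simp only [zero_smul, add_zero, sub_mul, mul_add, smul_add, smul_sub, smul_mul_assoc,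
          mul_smul_comm]
        abel
    have hforce : ∀ s ∈ Icc 0 T,
        ‖ε • ((Y ε s - Y 0 s) * R s)‖ ≤ |ε| * (C * |ε| * MR) := fun s hs => by
      rw [norm_smul, Real.norm_eq_abs]
      have hΔ := hC ε hε s hs
      gcongr
      exact (norm_mul_le _ _).trans
        (mul_le_mul hΔ (hMR s hs) (norm_nonneg _) ((norm_nonneg _).trans hΔ))
    have := norm_le_mul_gronwallBound_of_hasDerivWithinAt_mul_add hderiv hMA hforce
      (by simp [hY0 ε, hψ0]) t ht
    refine this.trans_eq ?_
    rw [← sq_abs ε]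
    ring
  refine hasDerivAt_of_norm_sub_sub_le_sq (C := C * MR * gronwallBound 0 MA 1 (T - 0)) ?_
  have hnear : ∀ᶠ ε in 𝓝 (0 : ℝ), |ε| ≤ 1 :=
    (continuous_abs.tendsto' 0 0 abs_zero).eventually (eventually_le_nhds one_pos)
  filter_upwards [hnear] with ε hε
  simpa using hsecond ε hε

end NormedRing

theorem ContinuousOn.hasDerivWithinAt_intervalIntegral {E : Type*} [NormedAddCommGroup E]
    [NormedSpace ℝ E] [CompleteSpace E] {f : ℝ → E} {a b s : ℝ}
    (hf : ContinuousOn f (Icc a b)) (hs : s ∈ Icc a b) :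
    HasDerivWithinAt (fun u => ∫ r in a..u, f r) (f s) (Icc a b) s :=
  have : Fact (s ∈ Icc a b) := ⟨hs⟩
  intervalIntegral.integral_hasDerivWithinAt_right
    ((hf.mono (Icc_subset_Icc_right hs.2)).intervalIntegrable_of_Icc hs.1)
    (hf.stronglyMeasurableAtFilter_nhdsWithin measurableSet_Icc s) (hf s hs)

section

variable {m : Type*} [Fintype m] [DecidableEq m]

/- Differentiability only depends on the topology, so the submultiplicative `L∞`-operator norm
can stand in for the entrywise sup norm. -/
theorem HasDerivWithinAt.matrix_mul {f g : ℝ → Matrix m m ℝ} {f' g' : Matrix m m ℝ}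
    {s : Set ℝ} {x : ℝ} (hf : HasDerivWithinAt f f' s x) (hg : HasDerivWithinAt g g' s x) :
    HasDerivWithinAt (fun r => f r * g r) (f' * g x + f x * g') s x :=
  let _ := Matrix.linftyOpNormedRing (n := m) (α := ℝ)
  let _ := Matrix.linftyOpNormedAlgebra (n := m) (R := ℝ) (α := ℝ)
  hf.mul hg

theorem ContinuousOn.matrix_inv {X : Type*} [TopologicalSpace X] {y : X → Matrix m m ℝ}
    {s : Set X} (hy : ContinuousOn y s) (hunit : ∀ x ∈ s, IsUnit (y x)) :
    ContinuousOn (fun x => (y x)⁻¹) s := fun x hx =>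
  have hdet : ContinuousAt Ring.inverse (y x).det := by
    rw [Ring.inverse_eq_inv']
    exact continuousAt_inv₀ ((Matrix.isUnit_iff_isUnit_det _).1 (hunit x hx)).ne_zero
  (continuousAt_matrix_inv _ hdet).comp_continuousWithinAt (hy x hx)

end

namespace Matrix

variable {m : Type*} [Fintype m] [DecidableEq m] {y A : ℝ → Matrix m m ℝ} {a b : ℝ}

theorem isUnit_of_hasDerivWithinAt_mul
    (hy : ∀ s ∈ Icc a b, HasDerivWithinAt y (y s * A s) (Icc a b) s)
    (hA : ContinuousOn A (Icc a b)) (ha : IsUnit (y a)) {t : ℝ} (ht : t ∈ Icc a b) :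
    IsUnit (y t) := by
  let _ := Matrix.linftyOpNormedRing (n := m) (α := ℝ)
  let _ := Matrix.linftyOpNormedAlgebra (n := m) (R := ℝ) (α := ℝ)
  rw [isUnit_iff_isUnit_det, isUnit_iff_ne_zero]
  intro hdet
  obtain ⟨v, hv, hvy⟩ := exists_vecMul_eq_zero_iff.2 hdet
  obtain ⟨j, hj⟩ := Function.ne_iff.1 hv
  have hrows : (of fun _ : m => v) * y t = 0 := by
    ext i k
    simpa [mul_apply, vecMul, dotProduct] using congrFun hvy k
  have hzero := ha.mul_left_eq_zero.1 (mul_eq_zero_of_hasDerivWithinAt_mul hy hA ht hrows)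
  exact hj (by simpa using congrFun (congrFun hzero j) j)

theorem hasDerivWithinAt_integral_conj_mul {R : ℝ → Matrix m m ℝ} {s : ℝ}
    (hy : ∀ s ∈ Icc a b, HasDerivWithinAt y (y s * A s) (Icc a b) s)
    (hunit : ∀ s ∈ Icc a b, IsUnit (y s)) (hR : ContinuousOn R (Icc a b)) (hs : s ∈ Icc a b) :
    HasDerivWithinAt (fun u => (∫ r in a..u, y r * R r * (y r)⁻¹) * y u)
      (y s * R s + ((∫ r in a..s, y r * R r * (y r)⁻¹) * y s) * A s) (Icc a b) s := by
  have hyc : ContinuousOn y (Icc a b) := fun s hs => (hy s hs).continuousWithinAt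
  have hconj : ContinuousOn (fun r => y r * R r * (y r)⁻¹) (Icc a b) :=
    (hyc.mul hR).mul (hyc.matrix_inv hunit)
  refine ((hconj.hasDerivWithinAt_intervalIntegral hs).matrix_mul (hy s hs)).congr_deriv ?_
  rw [mul_assoc (y s * R s), nonsing_inv_mul _ ((isUnit_iff_isUnit_det _).1 (hunit s hs)),
    mul_one, mul_assoc]

end Matrix

theorem variation_of_perturbed_left_linear_ode_general {n d : ℕ}
    (V : Fin d → Matrix (Fin n) (Fin n) ℝ) (T : ℝ)
    (x' ρ' : ℝ → Fin d → ℝ)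
    (hx'cont : ContinuousOn x' (Set.Icc 0 T))
    (hρ'cont : ContinuousOn ρ' (Set.Icc 0 T))
    (Y : ℝ → ℝ → Matrix (Fin n) (Fin n) ℝ)
    (hY0 : ∀ ε : ℝ, Y ε 0 = 1)
    (hYderiv : ∀ ε : ℝ, ∀ t ∈ Set.Icc (0 : ℝ) T,
      HasDerivWithinAt (Y ε)
        (Y ε t * ∑ k, (x' t k + ε * ρ' t k) • V k) (Set.Icc 0 T) t) :
    ∀ t ∈ Set.Icc (0 : ℝ) T,
      HasDerivAt (fun ε => Y ε t)
        ((∫ s in (0 : ℝ)..t, Y 0 s * (∑ k, ρ' s k • V k) * (Y 0 s)⁻¹) * Y 0 t) 0 := by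
  set A : ℝ → Matrix (Fin n) (Fin n) ℝ := fun s => ∑ k, x' s k • V k
  set R : ℝ → Matrix (Fin n) (Fin n) ℝ := fun s => ∑ k, ρ' s k • V k
  have hA : ContinuousOn A (Icc 0 T) := by fun_prop
  have hR : ContinuousOn R (Icc 0 T) := by fun_prop
  have hY : ∀ ε, ∀ s ∈ Icc 0 T,
      HasDerivWithinAt (Y ε) (Y ε s * (A s + ε • R s)) (Icc 0 T) s := fun ε s hs => by
    simpa [A, R, add_smul, mul_smul, Finset.sum_add_distrib, Finset.smul_sum] using hYderiv ε s hs
  have hy : ∀ s ∈ Icc 0 T, HasDerivWithinAt (Y 0) (Y 0 s * A s) (Icc 0 T) s := by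
    simpa using hY 0
  have hunit : ∀ s ∈ Icc 0 T, IsUnit (Y 0 s) := fun s hs =>
    Matrix.isUnit_of_hasDerivWithinAt_mul hy hA (by simp [hY0]) hs
  have hψ := fun s (hs : s ∈ Icc 0 T) => Matrix.hasDerivWithinAt_integral_conj_mul hy hunit hR hs
  intro t ht
  let _ := Matrix.linftyOpNormedRing (n := Fin n) (α := ℝ)
  let _ := Matrix.linftyOpNormedAlgebra (n := Fin n) (R := ℝ) (α := ℝ)
  exact hasDerivAt_perturbed_of_linearized hA hR (by simp [hY0]) hY (by simp) hψ ht

/-- **Variation formula for perturbed left linear matrix ODEs.**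
Let `Y (ε, ·)` solve `Y(ε,0) = I`, `∂ₜ Y(ε,t) = Y(ε,t) * (∑ k, ((xᵏ)'(t) + ε (ρᵏ)'(t)) • V k)`
on `[0,T]`, with `x, ρ` continuously differentiable, and write `y := Y 0`. Then for every
`t ∈ [0,T]` the map `ε ↦ Y (ε, t)` is differentiable at `ε = 0` with derivative
`(∫₀ᵗ y s * (∑ k, (ρᵏ)'(s) • V k) * (y s)⁻¹ ds) * y t` (the integrand is `Ad_{y s}` applied to
`∑ k (ρᵏ)'(s) V k`). -/
theorem variation_of_perturbed_left_linear_ode {n d : ℕ}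
    (V : Fin d → Matrix (Fin n) (Fin n) ℝ) (T : ℝ) (hT : 0 < T)
    (x ρ x' ρ' : ℝ → Fin d → ℝ)
    (hx'cont : ContinuousOn x' (Set.Icc 0 T))
    (hρ'cont : ContinuousOn ρ' (Set.Icc 0 T))
    (hx : ∀ t ∈ Set.Icc (0 : ℝ) T, ∀ k,
      HasDerivWithinAt (fun u => x u k) (x' t k) (Set.Icc 0 T) t)
    (hρ : ∀ t ∈ Set.Icc (0 : ℝ) T, ∀ k,
      HasDerivWithinAt (fun u => ρ u k) (ρ' t k) (Set.Icc 0 T) t)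
    (Y : ℝ → ℝ → Matrix (Fin n) (Fin n) ℝ)
    (hY0 : ∀ ε : ℝ, Y ε 0 = 1)
    (hYcont : ∀ ε : ℝ, ContinuousOn (Y ε) (Set.Icc 0 T))
    (hYderiv : ∀ ε : ℝ, ∀ t ∈ Set.Icc (0 : ℝ) T,
      HasDerivWithinAt (Y ε)
        (Y ε t * ∑ k, (x' t k + ε * ρ' t k) • V k) (Set.Icc 0 T) t) :
    ∀ t ∈ Set.Icc (0 : ℝ) T,
      HasDerivAt (fun ε => Y ε t)
        ((∫ s in (0 : ℝ)..t, Y 0 s * (∑ k, ρ' s k • V k) * (Y 0 s)⁻¹) * Y 0 t) 0 :=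
  variation_of_perturbed_left_linear_ode_general V T x' ρ' hx'cont hρ'cont Y hY0 hYderiv
end

section
/- Let V_1, …, V_d be real n×n matrices such that [[V_i, V_j], V_k] = 0 for all i, j, k ∈ {1,…,d}, where [A,B] := AB − BA. Let b : [0,∞) → ℝ^d be continuously differentiable with b(0) = 0. Define A(t) := Σ_{i=1}^d b^i(t) V_i + (1/2) Σ_{1 ≤ i < j ≤ d} ( ∫_0^t ( b^i(s) (b^j)′(s) − b^j(s) (b^i)′(s) ) ds ) [V_i, V_j]. Then X(t) := exp(A(t)) satisfies X(0) = I and, for every t ≥ 0, X′(t) = X(t)·( Σ_{i=1}^d (b^i)′(t) V_i ). -/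
open NormedSpace

section Abstract
variable {𝔸 : Type*} [NormedRing 𝔸] [NormedAlgebra ℝ 𝔸] [CompleteSpace 𝔸]

lemma const_of_hasDerivAt_zero {f : ℝ → 𝔸} (h : ∀ s, HasDerivAt f 0 s) (s : ℝ) : f s = f 0 :=
  is_const_of_deriv_eq_zero (fun x => (h x).differentiableAt) (fun x => (h x).deriv) s 0

/-- push a factor through `exp` when the commutator is central -/
lemma mul_exp_smul (X Y : 𝔸) (hY : Y * (X * Y - Y * X) = (X * Y - Y * X) * Y) (s : ℝ) :
    X * exp (s • Y) = exp (s • Y) * (X + s • (X * Y - Y * X)) := by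
  set Z : 𝔸 := X * Y - Y * X with hZ
  set F : ℝ → 𝔸 := fun s => X * exp (s • Y) - exp (s • Y) * (X + s • Z) with hFdef
  have hE : ∀ u : ℝ, HasDerivAt (fun v : ℝ => exp (v • Y)) (exp (u • Y) * Y) u :=
    fun u => hasDerivAt_exp_smul_const Y u
  have hF : ∀ u : ℝ, HasDerivAt F (F u * Y) u := by
    intro u
    have h1 : HasDerivAt (fun v : ℝ => X * exp (v • Y)) (X * (exp (u • Y) * Y)) u :=
      (hE u).const_mul X
    have h2 : HasDerivAt (fun v : ℝ => X + v • Z) Z u := by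
      simpa using ((hasDerivAt_id u).smul_const Z).const_add X
    have h3 := (hE u).mul h2
    have h4 := h1.sub h3
    refine h4.congr_deriv (Eq.symm ?_)
    have key : Y * (X + u • Z) + Z = (X + u • Z) * Y := by
      have : Y * Z = Z * Y := hY
      simp only [mul_add, add_mul, mul_smul_comm, smul_mul_assoc, this]
      rw [hZ]
      abel
    calc F u * Y = X * exp (u • Y) * Y - exp (u • Y) * ((X + u • Z) * Y) := by
          rw [hFdef]; simp [sub_mul, mul_assoc]
      _ = X * (exp (u • Y) * Y) - (exp (u • Y) * Y * (X + u • Z) + exp (u • Y) * Z) := by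
          rw [← key]; simp [mul_add, mul_assoc]
  have hN : ∀ u : ℝ, HasDerivAt (fun v : ℝ => exp ((-v) • Y))
      ((-1 : ℝ) • (exp ((-u) • Y) * Y)) u := by
    intro u
    exact (hasDerivAt_exp_smul_const Y (-u)).scomp u (hasDerivAt_neg u)
  have hcomm : ∀ u : ℝ, Y * exp ((-u) • Y) = exp ((-u) • Y) * Y := fun u =>
    (((Commute.refl Y).smul_right (-u)).exp_right).eq
  have hG : ∀ u : ℝ, HasDerivAt (fun v => F v * exp ((-v) • Y)) 0 u := by
    intro u
    have := (hF u).mul (hN u)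
    refine this.congr_deriv ?_
    rw [mul_assoc, hcomm u]
    simp [mul_smul_comm, mul_assoc]
  have hzero : ∀ u : ℝ, F u * exp ((-u) • Y) = 0 := by
    intro u
    have := const_of_hasDerivAt_zero hG u
    simpa [hFdef] using this
  have hinv : exp ((-s) • Y) * exp (s • Y) = 1 := by
    letI : NormedAlgebra ℚ 𝔸 := NormedAlgebra.restrictScalars ℚ ℝ 𝔸
    rw [← exp_add_of_commute (((Commute.refl Y).smul_left (-s)).smul_right s)]
    rw [← add_smul]
    simp
  have : F s * (exp ((-s) • Y) * exp (s • Y)) = 0 := by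
    rw [← mul_assoc, hzero s, zero_mul]
  rw [hinv, mul_one] at this
  have := sub_eq_zero.mp this
  exact this

end Abstract

section Abstract2
variable {𝔸 : Type*} [NormedRing 𝔸] [NormedAlgebra ℝ 𝔸] [CompleteSpace 𝔸]

lemma alg_push {R : Type*} [Ring R] [Module ℝ R] [SMulCommClass ℝ R R] [IsScalarTower ℝ R R]
    (e1 e2 e3 X Y Z : R) (u : ℝ)
    (p2 : X * e2 = e2 * (X + u • Z))
    (q3X : X * e3 = e3 * X) (q3Y : Y * e3 = e3 * Y) (q3Z : Z * e3 = e3 * Z) :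
    (e1 * X * e2 + e1 * (e2 * Y)) * e3 + e1 * e2 * ((-u) • (e3 * Z))
      = e1 * e2 * e3 * (X + Y) := by
  have r2 : ∀ W, X * (e2 * W) = e2 * (X * W) + u • (e2 * (Z * W)) := by
    intro W
    rw [← mul_assoc, p2, mul_assoc, add_mul, smul_mul_assoc, mul_add, mul_smul_comm]
  have r3X : ∀ W, X * (e3 * W) = e3 * (X * W) := by
    intro W; rw [← mul_assoc, q3X, mul_assoc]
  have r3Y : ∀ W, Y * (e3 * W) = e3 * (Y * W) := by
    intro W; rw [← mul_assoc, q3Y, mul_assoc]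
  have r3Z : ∀ W, Z * (e3 * W) = e3 * (Z * W) := by
    intro W; rw [← mul_assoc, q3Z, mul_assoc]
  simp only [mul_add, add_mul, smul_mul_assoc, mul_smul_comm, mul_assoc, r2, r3X, r3Y, r3Z,
    p2, q3X, q3Y, q3Z, neg_smul, mul_neg, neg_mul]
  abel

/-- BCH formula in the two-step nilpotent case -/
lemma exp_add_of_central (X Y : 𝔸) (hX : X * (X * Y - Y * X) = (X * Y - Y * X) * X)
    (hY : Y * (X * Y - Y * X) = (X * Y - Y * X) * Y) :
    exp (X + Y) = exp X * exp Y * exp ((-(1/2) : ℝ) • (X * Y - Y * X)) := by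
  set Z : 𝔸 := X * Y - Y * X with hZ
  set g : ℝ → ℝ := fun s => (-(1/2) : ℝ) * s ^ 2 with hgdef
  have hg : ∀ u : ℝ, HasDerivAt g (-u) u := by
    intro u
    have := (hasDerivAt_pow 2 u).const_mul (-(1/2) : ℝ)
    refine this.congr_deriv ?_
    ring
  have h3 : ∀ u : ℝ, HasDerivAt (fun v => exp (g v • Z)) ((-u) • (exp (g u • Z) * Z)) u :=
    fun u => (hasDerivAt_exp_smul_const Z (g u)).scomp u (hg u)
  set F : ℝ → 𝔸 := fun s => exp (s • X) * exp (s • Y) * exp (g s • Z) with hFdef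
  have cXZ : Commute X Z := hX
  have cYZ : Commute Y Z := hY
  have hF : ∀ u : ℝ, HasDerivAt F (F u * (X + Y)) u := by
    intro u
    have h12 := (hasDerivAt_exp_smul_const X u).mul (hasDerivAt_exp_smul_const Y u)
    have h123 := h12.mul (h3 u)
    refine h123.congr_deriv ?_
    exact (alg_push (exp (u • X)) (exp (u • Y)) (exp (g u • Z)) X Y Z u
      (mul_exp_smul X Y hY u)
      ((cXZ.smul_right (g u)).exp_right).eq
      ((cYZ.smul_right (g u)).exp_right).eq
      (((Commute.refl Z).smul_right (g u)).exp_right).eq)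
  have hcomm4 : ∀ u : ℝ, (X + Y) * exp ((-u) • (X + Y)) = exp ((-u) • (X + Y)) * (X + Y) :=
    fun u => (((Commute.refl (X + Y)).smul_right (-u)).exp_right).eq
  have hN : ∀ u : ℝ, HasDerivAt (fun v : ℝ => exp ((-v) • (X + Y)))
      ((-1 : ℝ) • (exp ((-u) • (X + Y)) * (X + Y))) u := by
    intro u
    exact (hasDerivAt_exp_smul_const (X + Y) (-u)).scomp u (hasDerivAt_neg u)
  have hH : ∀ u : ℝ, HasDerivAt (fun v => F v * exp ((-v) • (X + Y))) 0 u := by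
    intro u
    have h := (hF u).mul (hN u)
    refine h.congr_deriv ?_
    rw [mul_assoc, hcomm4 u, neg_one_smul, mul_neg, add_neg_cancel]
  have hone : F 1 * exp ((-(1:ℝ)) • (X + Y)) = 1 := by
    have h := const_of_hasDerivAt_zero hH 1
    have h0 : F 0 * exp ((-(0:ℝ)) • (X + Y)) = 1 := by
      rw [hFdef]
      norm_num [hgdef]
    rw [← h0]
    exact h
  have hinv : exp ((-(1:ℝ)) • (X + Y)) * exp ((1:ℝ) • (X + Y)) = 1 := by
    letI : NormedAlgebra ℚ 𝔸 := NormedAlgebra.restrictScalars ℚ ℝ 𝔸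
    rw [← exp_add_of_commute (((Commute.refl (X+Y)).smul_left (-(1:ℝ))).smul_right (1:ℝ)),
      ← add_smul]
    norm_num
  have hkey : F 1 = exp ((1:ℝ) • (X + Y)) := by
    have h2 := congrArg (fun W => W * exp ((1:ℝ) • (X + Y))) hone
    simpa only [mul_assoc, hinv, one_mul, mul_one] using h2
  have hF1 : F 1 = exp X * exp Y * exp ((-(1/2) : ℝ) • Z) := by
    rw [hFdef]
    norm_num [hgdef]
  rw [← hF1, hkey, one_smul]

end Abstract2

section LieAlg
variable {R : Type*} [Ring R] [Algebra ℝ R]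
attribute [local instance] LieRing.ofAssociativeRing

lemma sum_lie' {ι : Type*} (s : Finset ι) (f : ι → R) (W : R) :
    ⁅∑ i ∈ s, f i, W⁆ = ∑ i ∈ s, ⁅f i, W⁆ := by
  induction s using Finset.cons_induction with
  | empty => simp
  | cons a s ha ih => simp [Finset.sum_cons, add_lie, ih]

lemma lie_sum' {ι : Type*} (s : Finset ι) (f : ι → R) (W : R) :
    ⁅W, ∑ i ∈ s, f i⁆ = ∑ i ∈ s, ⁅W, f i⁆ := by
  induction s using Finset.cons_induction with
  | empty => simp
  | cons a s ha ih => simp [Finset.sum_cons, lie_add, ih]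

lemma antisym {d : ℕ} (V : Fin d → R) (c c' : Fin d → ℝ) :
    ∑ i, ∑ j, (if i < j then ((c i * c' j - c j * c' i) • ⁅V i, V j⁆) else 0)
      = ⁅∑ i, c i • V i, ∑ j, c' j • V j⁆ := by
  have hsum : ⁅∑ i, c i • V i, ∑ j, c' j • V j⁆ = ∑ i, ∑ j, (c i * c' j) • ⁅V i, V j⁆ := by
    simp only [sum_lie', lie_sum', smul_lie, lie_smul, smul_smul, Finset.smul_sum]
    rw [Finset.sum_comm]
    exact Finset.sum_congr rfl fun i _ => Finset.sum_congr rfl fun j _ => by rw [mul_comm]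
  rw [hsum]
  symm
  have split : ∀ i j : Fin d, (c i * c' j) • ⁅V i, V j⁆ =
      (if i < j then (c i * c' j) • ⁅V i, V j⁆ else 0)
        + (if j < i then (c i * c' j) • ⁅V i, V j⁆ else 0) := by
    intro i j
    rcases lt_trichotomy i j with h | h | h
    · simp [h, asymm h]
    · subst h; simp
    · simp [h, asymm h]
  calc ∑ i, ∑ j, (c i * c' j) • ⁅V i, V j⁆
      = ∑ i, ∑ j, ((if i < j then (c i * c' j) • ⁅V i, V j⁆ else 0)
          + (if j < i then (c i * c' j) • ⁅V i, V j⁆ else 0)) :=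
        Finset.sum_congr rfl fun i _ => Finset.sum_congr rfl fun j _ => split i j
    _ = (∑ i, ∑ j, (if i < j then (c i * c' j) • ⁅V i, V j⁆ else 0))
          + ∑ i, ∑ j, (if j < i then (c i * c' j) • ⁅V i, V j⁆ else 0) := by
        simp [Finset.sum_add_distrib]
    _ = (∑ i, ∑ j, (if i < j then (c i * c' j) • ⁅V i, V j⁆ else 0))
          + ∑ i, ∑ j, (if i < j then (c j * c' i) • ⁅V j, V i⁆ else 0) := by
        congr 1
        rw [Finset.sum_comm]
    _ = ∑ i, ∑ j, (if i < j then ((c i * c' j - c j * c' i) • ⁅V i, V j⁆) else 0) := by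
        rw [← Finset.sum_add_distrib]
        refine Finset.sum_congr rfl fun i _ => ?_
        rw [← Finset.sum_add_distrib]
        refine Finset.sum_congr rfl fun j _ => ?_
        by_cases h : i < j
        · simp only [h, if_pos]
          rw [← lie_skew (V j) (V i), smul_neg, ← neg_smul, ← add_smul]
          rw [← sub_eq_add_neg]
        · simp [h]

end LieAlg

section Span
variable {R : Type*} [Ring R] [Algebra ℝ R] {d : ℕ}
attribute [local instance] LieRing.ofAssociativeRing

lemma cent_commute (V : Fin d → R) (c : R) (hc : ∀ k, Commute (V k) c)
    {x : R} (hx : x ∈ Algebra.adjoin ℝ (Set.range V)) : Commute x c := by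
  induction hx using Algebra.adjoin_induction with
  | mem g hg => obtain ⟨k, rfl⟩ := hg; exact hc k
  | algebraMap r => exact Algebra.commutes r c
  | add x y hx hy ihx ihy => exact ihx.add_left ihy
  | mul x y hx hy ihx ihy => exact ihx.mul_left ihy

/-- brackets of the generators -/
def pZ (V : Fin d → R) : Set R := {w : R | ∃ i j, w = ⁅V i, V j⁆}

/-- generators together with their brackets -/
def pS (V : Fin d → R) : Set R := Set.range V ∪ pZ V

lemma spanZ_cent (V : Fin d → R) (hC : ∀ i j k, Commute ⁅V i, V j⁆ (V k))
    {z : R} (hz : z ∈ Submodule.span ℝ (pZ V)) : ∀ k, Commute (V k) z := by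
  intro k
  induction hz using Submodule.span_induction with
  | mem w hw => obtain ⟨i, j, rfl⟩ := hw; exact (hC i j k).symm
  | zero => exact Commute.zero_right _
  | add x y hx hy ihx ihy => exact ihx.add_right ihy
  | smul r x hx ih => exact ih.smul_right r

lemma pS_subset_adjoin (V : Fin d → R) : pS V ⊆ (Algebra.adjoin ℝ (Set.range V) : Subalgebra ℝ R) := by
  rintro w (hw | ⟨i, j, rfl⟩)
  · exact Algebra.subset_adjoin hw
  · rw [Ring.lie_def]
    exact sub_mem (mul_mem (Algebra.subset_adjoin ⟨i, rfl⟩) (Algebra.subset_adjoin ⟨j, rfl⟩))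
      (mul_mem (Algebra.subset_adjoin ⟨j, rfl⟩) (Algebra.subset_adjoin ⟨i, rfl⟩))

lemma spanS_mem_adjoin (V : Fin d → R) {x : R} (hx : x ∈ Submodule.span ℝ (pS V)) :
    x ∈ Algebra.adjoin ℝ (Set.range V) := by
  have h : Submodule.span ℝ (pS V) ≤ Subalgebra.toSubmodule (Algebra.adjoin ℝ (Set.range V)) :=
    Submodule.span_le.mpr (pS_subset_adjoin V)
  exact h hx

lemma commZ_mem (V : Fin d → R) (hC : ∀ i j k, Commute ⁅V i, V j⁆ (V k))
    (i j : Fin d) {w : R} (hw : w ∈ pS V) : Commute ⁅V i, V j⁆ w := by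
  rcases hw with ⟨k, rfl⟩ | ⟨k, l, rfl⟩
  · exact hC i j k
  · rw [Ring.lie_def (V k) (V l)]
    exact ((hC i j k).mul_right (hC i j l)).sub_right ((hC i j l).mul_right (hC i j k))

lemma lie_mem_spanZ (V : Fin d → R) (hC : ∀ i j k, Commute ⁅V i, V j⁆ (V k))
    {x y : R} (hx : x ∈ Submodule.span ℝ (pS V)) (hy : y ∈ Submodule.span ℝ (pS V)) :
    ⁅x, y⁆ ∈ Submodule.span ℝ (pZ V) := by
  have base : ∀ g ∈ pS V, ∀ g' ∈ pS V, ⁅g, g'⁆ ∈ Submodule.span ℝ (pZ V) := by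
    rintro g hg g' hg'
    rcases hg with ⟨k, rfl⟩ | ⟨i, j, rfl⟩
    · rcases hg' with ⟨l, rfl⟩ | ⟨i, j, rfl⟩
      · exact Submodule.subset_span ⟨k, l, rfl⟩
      · rw [commute_iff_lie_eq.mp ((commZ_mem V hC i j (Or.inl ⟨k, rfl⟩)).symm)]
        exact zero_mem _
    · rw [commute_iff_lie_eq.mp (commZ_mem V hC i j hg')]
      exact zero_mem _
  have step : ∀ g ∈ pS V, ∀ y ∈ Submodule.span ℝ (pS V), ⁅g, y⁆ ∈ Submodule.span ℝ (pZ V) := by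
    intro g hg y hy
    induction hy using Submodule.span_induction with
    | mem w hw => exact base g hg w hw
    | zero => rw [lie_zero]; exact zero_mem _
    | add a b ha hb iha ihb => rw [lie_add]; exact add_mem iha ihb
    | smul r a ha ih => rw [lie_smul]; exact Submodule.smul_mem _ r ih
  induction hx using Submodule.span_induction with
  | mem w hw => exact step w hw y hy
  | zero => rw [zero_lie]; exact zero_mem _
  | add a b ha hb iha ihb => rw [add_lie]; exact add_mem iha ihb
  | smul r a ha ih => rw [smul_lie]; exact Submodule.smul_mem _ r ih

end Span

section Core
attribute [local instance] LieRing.ofAssociativeRing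
attribute [local instance] Matrix.linftyOpSemiNormedRing Matrix.linftyOpNormedRing
  Matrix.linftyOpNormedAlgebra

theorem core_thm {n d : ℕ} (V : Fin d → Matrix (Fin n) (Fin n) ℝ)
    (hnil : ∀ i j k : Fin d, ⁅⁅V i, V j⁆, V k⁆ = 0)
    (b b' : ℝ → Fin d → ℝ) (hb0 : b 0 = 0)
    (hb'cont : ContinuousOn b' (Set.Ici 0))
    (hb : ∀ t ∈ Set.Ici (0 : ℝ), ∀ i,
      HasDerivWithinAt (fun u => b u i) (b' t i) (Set.Ici 0) t)
    (A : ℝ → Matrix (Fin n) (Fin n) ℝ)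
    (hA : ∀ t : ℝ, A t =
      ∑ i, b t i • V i +
        (1 / 2 : ℝ) • ∑ i, ∑ j,
          if i < j then
            (∫ s in (0 : ℝ)..t, (b s i * b' s j - b s j * b' s i)) • ⁅V i, V j⁆
          else 0) :
    NormedSpace.exp (A 0) = 1 ∧
    ∀ t ∈ Set.Ici (0:ℝ),
      Filter.Tendsto (slope (fun u => NormedSpace.exp (A u)) t)
        (nhdsWithin t (Set.Ici 0 \ {t}))
        (nhds (NormedSpace.exp (A t) * ∑ i, b' t i • V i)) := by
  have hA0 : A 0 = 0 := by
    rw [hA 0]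
    simp [hb0, intervalIntegral.integral_same]
  constructor
  · rw [hA0]; exact NormedSpace.exp_zero
  intro t ht
  have hC : ∀ i j k, Commute ⁅V i, V j⁆ (V k) := fun i j k => commute_iff_lie_eq.mpr (hnil i j k)
  have hbc : ∀ i, ContinuousOn (fun s => b s i) (Set.Ici 0) :=
    fun i s hs => (hb s hs i).continuousWithinAt
  have hb'c : ∀ i, ContinuousOn (fun s => b' s i) (Set.Ici 0) :=
    fun i => (continuous_apply i).comp_continuousOn hb'cont
  have hfc : ∀ i j, ContinuousOn (fun s => b s i * b' s j - b s j * b' s i) (Set.Ici 0) :=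
    fun i j => ((hbc i).mul (hb'c j)).sub ((hbc j).mul (hb'c i))
  have hint : ∀ i j, HasDerivWithinAt
      (fun u => ∫ s in (0:ℝ)..u, (b s i * b' s j - b s j * b' s i))
      (b t i * b' t j - b t j * b' t i) (Set.Ici 0) t := by
    intro i j
    have hiInt : IntervalIntegrable (fun s => b s i * b' s j - b s j * b' s i)
        MeasureTheory.volume 0 t := by
      apply ContinuousOn.intervalIntegrable
      apply (hfc i j).mono
      rw [Set.uIcc_of_le ht]
      exact Set.Icc_subset_Ici_self
    rcases eq_or_lt_of_le (Set.mem_Ici.mp ht : (0:ℝ) ≤ t) with rfl | htpos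
    · exact intervalIntegral.integral_hasDerivWithinAt_right (s := Set.Ici 0) (t := Set.Ioi 0)
        hiInt ⟨Set.Ici 0, Filter.mem_of_superset self_mem_nhdsWithin Set.Ioi_subset_Ici_self,
          ((hfc i j).aestronglyMeasurable measurableSet_Ici)⟩
        (((hfc i j) 0 ht).mono Set.Ioi_subset_Ici_self)
    · have hmem : Set.Ici (0:ℝ) ∈ nhds t := Ici_mem_nhds htpos
      have hca : ContinuousAt (fun s => b s i * b' s j - b s j * b' s i) t :=
        (hfc i j).continuousAt hmem
      exact (intervalIntegral.integral_hasDerivAt_right hiInt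
        ⟨Set.Ici 0, hmem, ((hfc i j).aestronglyMeasurable measurableSet_Ici)⟩
        hca).hasDerivWithinAt
  set Bt : Matrix (Fin n) (Fin n) ℝ := ∑ i, b t i • V i with hBt
  set B' : Matrix (Fin n) (Fin n) ℝ := ∑ i, b' t i • V i with hB'
  set D : Matrix (Fin n) (Fin n) ℝ :=
    (1/2 : ℝ) • ∑ i, ∑ j, (if i < j then ((b t i * b' t j - b t j * b' t i) • ⁅V i, V j⁆) else 0)
    with hD
  set A't : Matrix (Fin n) (Fin n) ℝ := B' + D with hA't
  have hAd : HasDerivWithinAt A A't (Set.Ici 0) t := by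
    have h1 : HasDerivWithinAt (fun u => ∑ i, b u i • V i) B' (Set.Ici 0) t := by
      apply HasDerivWithinAt.fun_sum
      intro i _
      exact (hb t ht i).smul_const (V i)
    have h2 : HasDerivWithinAt (fun u => (1/2:ℝ) • ∑ i, ∑ j,
        (if i < j then ((∫ s in (0:ℝ)..u, (b s i * b' s j - b s j * b' s i)) • ⁅V i, V j⁆) else 0))
        D (Set.Ici 0) t := by
      apply HasDerivWithinAt.fun_const_smul
      apply HasDerivWithinAt.fun_sum; intro i _
      apply HasDerivWithinAt.fun_sum; intro j _
      by_cases hij : i < j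
      · simp only [hij, if_true]
        exact (hint i j).smul_const _
      · simp only [hij, if_false]
        exact hasDerivWithinAt_const _ _ _
    exact (h1.add h2).congr (fun u _ => hA u) (hA t)
  have hBmem : ∀ (c : Fin d → ℝ), (∑ i, c i • V i) ∈ Submodule.span ℝ (pS V) := fun c =>
    Submodule.sum_mem _ (fun i _ =>
      Submodule.smul_mem _ _ (Submodule.subset_span (Or.inl ⟨i, rfl⟩)))
  have hDmem : ∀ (co : Fin d → Fin d → ℝ),
      ((1/2:ℝ) • ∑ i, ∑ j, (if i < j then (co i j • ⁅V i, V j⁆) else 0))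
        ∈ Submodule.span ℝ (pZ V) := by
    intro co
    refine Submodule.smul_mem _ _ (Submodule.sum_mem _ fun i _ =>
      Submodule.sum_mem _ fun j _ => ?_)
    by_cases hij : i < j
    · simp only [hij, if_true]; exact Submodule.smul_mem _ _ (Submodule.subset_span ⟨i, j, rfl⟩)
    · simp only [hij, if_false]; exact zero_mem _
  have hZleS : Submodule.span ℝ (pZ V) ≤ Submodule.span ℝ (pS V) :=
    Submodule.span_mono Set.subset_union_right
  have hAmem : ∀ u, A u ∈ Submodule.span ℝ (pS V) := fun u => by
    rw [hA u]; exact add_mem (hBmem _) (hZleS (hDmem _))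
  have key : ∀ z ∈ Submodule.span ℝ (pZ V), ∀ x ∈ Submodule.span ℝ (pS V), Commute x z :=
    fun z hz x hx => cent_commute V z (spanZ_cent V hC hz) (spanS_mem_adjoin V hx)
  have hfact : ∀ u, NormedSpace.exp (A u) = NormedSpace.exp (A t)
      * NormedSpace.exp (A u - A t)
      * NormedSpace.exp ((-(1/2) : ℝ) • (A t * (A u - A t) - (A u - A t) * A t)) := by
    intro u
    have hXmem : A t ∈ Submodule.span ℝ (pS V) := hAmem t
    have hYmem : A u - A t ∈ Submodule.span ℝ (pS V) := sub_mem (hAmem u) hXmem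
    have hW : ⁅A t, A u - A t⁆ ∈ Submodule.span ℝ (pZ V) := lie_mem_spanZ V hC hXmem hYmem
    have hX : Commute (A t) (A t * (A u - A t) - (A u - A t) * A t) := by
      have h := key _ hW _ hXmem; rwa [Ring.lie_def] at h
    have hYc : Commute (A u - A t) (A t * (A u - A t) - (A u - A t) * A t) := by
      have h := key _ hW _ hYmem; rwa [Ring.lie_def] at h
    have h := exp_add_of_central (A t) (A u - A t) hX.eq hYc.eq
    rwa [add_sub_cancel] at h
  have hgin : HasDerivWithinAt (fun u => A u - A t) A't (Set.Ici 0) t := hAd.sub_const (A t)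
  have hg : HasDerivWithinAt (fun u => NormedSpace.exp (A u - A t)) A't (Set.Ici 0) t := by
    have hout : HasFDerivAt (NormedSpace.exp)
        (1 : Matrix (Fin n) (Fin n) ℝ →L[ℝ] Matrix (Fin n) (Fin n) ℝ) (A t - A t) := by
      rw [sub_self]; exact hasFDerivAt_exp_zero
    exact hout.comp_hasDerivWithinAt t hgin
  have hhin : HasDerivWithinAt
      (fun u => (-(1/2) : ℝ) • (A t * (A u - A t) - (A u - A t) * A t))
      ((-(1/2) : ℝ) • (A t * A't - A't * A t)) (Set.Ici 0) t :=
    ((hgin.const_mul (A t)).fun_sub (hgin.mul_const (A t))).fun_const_smul _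
  have hh : HasDerivWithinAt
      (fun u => NormedSpace.exp ((-(1/2):ℝ) • (A t * (A u - A t) - (A u - A t) * A t)))
      ((-(1/2) : ℝ) • (A t * A't - A't * A t)) (Set.Ici 0) t := by
    have h0 : ((-(1/2):ℝ) • (A t * (A t - A t) - (A t - A t) * A t))
        = (0 : Matrix (Fin n) (Fin n) ℝ) := by simp
    have hout : HasFDerivAt (NormedSpace.exp)
        (1 : Matrix (Fin n) (Fin n) ℝ →L[ℝ] Matrix (Fin n) (Fin n) ℝ)
        ((-(1/2):ℝ) • (A t * (A t - A t) - (A t - A t) * A t)) := by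
      rw [h0]; exact hasFDerivAt_exp_zero
    exact hout.comp_hasDerivWithinAt t hhin
  have hprod := (hg.const_mul (NormedSpace.exp (A t))).mul hh
  have hres := hprod.congr (fun u _ => hfact u) (hfact t)
  have hDeq : D = (1/2 : ℝ) • ⁅Bt, B'⁆ := by
    rw [hD, antisym V (b t) (b' t), hBt, hB']
  have hlie : ⁅A t, A't⁆ = ⁅Bt, B'⁆ := by
    have hAteq : A t = Bt + (1/2 : ℝ) • ∑ i, ∑ j,
        (if i < j then ((∫ s in (0:ℝ)..t, (b s i * b' s j - b s j * b' s i)) • ⁅V i, V j⁆) else 0) :=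
      hA t
    set Dt : Matrix (Fin n) (Fin n) ℝ := (1/2 : ℝ) • ∑ i, ∑ j,
        (if i < j then ((∫ s in (0:ℝ)..t, (b s i * b' s j - b s j * b' s i)) • ⁅V i, V j⁆) else 0)
      with hDt
    have hDtmem : Dt ∈ Submodule.span ℝ (pZ V) := hDmem _
    have hDmem' : D ∈ Submodule.span ℝ (pZ V) := hDmem _
    rw [hAteq, hA't, add_lie, lie_add, lie_add]
    have k1 : ⁅Bt, D⁆ = 0 := commute_iff_lie_eq.mp (key D hDmem' Bt (hBmem _))
    have k2 : ⁅Dt, B'⁆ = 0 := by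
      rw [← lie_skew, commute_iff_lie_eq.mp (key Dt hDtmem B' (hBmem _)), neg_zero]
    have k3 : ⁅Dt, D⁆ = 0 := commute_iff_lie_eq.mp (key D hDmem' Dt (hZleS hDtmem))
    rw [k1, k2, k3]
    abel
  have heq : NormedSpace.exp (A t) * A't
      * NormedSpace.exp ((-(1/2):ℝ) • (A t * (A t - A t) - (A t - A t) * A t))
      + NormedSpace.exp (A t) * NormedSpace.exp (A t - A t)
        * ((-(1/2) : ℝ) • (A t * A't - A't * A t))
      = NormedSpace.exp (A t) * ∑ i, b' t i • V i := by
    rw [sub_self]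
    simp only [mul_zero, zero_mul, sub_zero, smul_zero, NormedSpace.exp_zero, mul_one]
    rw [← mul_add]
    congr 1
    have hlie' : A t * A't - A't * A t = ⁅Bt, B'⁆ := by
      rw [← Ring.lie_def, hlie]
    rw [hlie', hA't, hDeq, ← hB']
    rw [add_assoc, ← add_smul]
    norm_num
  rw [heq] at hres
  exact hasDerivWithinAt_iff_tendsto_slope.mp hres

end Core

attribute [local instance] Matrix.normedAddCommGroup Matrix.normedSpace

/-- **Closed-form exponential solution of a left linear ODE in the two-step nilpotent case.**
If `⁅⁅V i, V j⁆, V k⁆ = 0` for all `i, j, k`, `b` is continuously differentiable on `[0,∞)`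
with `b 0 = 0`, and
`A t = ∑ i, bⁱ t • V i + (1/2) ∑_{i<j} (∫₀ᵗ (bⁱ (bʲ)' − bʲ (bⁱ)')) • ⁅V i, V j⁆`,
then `X t := exp (A t)` satisfies `X 0 = I` and `X' t = X t * ∑ i, (bⁱ)'(t) • V i` for
`t ≥ 0`. -/
theorem two_step_nilpotent_ode_exp_closed_form {n d : ℕ}
    (V : Fin d → Matrix (Fin n) (Fin n) ℝ)
    (hnil : ∀ i j k : Fin d, ⁅⁅V i, V j⁆, V k⁆ = 0)
    (b b' : ℝ → Fin d → ℝ) (hb0 : b 0 = 0)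
    (hb'cont : ContinuousOn b' (Set.Ici 0))
    (hb : ∀ t ∈ Set.Ici (0 : ℝ), ∀ i,
      HasDerivWithinAt (fun u => b u i) (b' t i) (Set.Ici 0) t)
    (A : ℝ → Matrix (Fin n) (Fin n) ℝ)
    (hA : ∀ t : ℝ, A t =
      ∑ i, b t i • V i +
        (1 / 2 : ℝ) • ∑ i, ∑ j,
          if i < j then
            (∫ s in (0 : ℝ)..t, (b s i * b' s j - b s j * b' s i)) • ⁅V i, V j⁆
          else 0) :
    NormedSpace.exp (A 0) = 1 ∧
    ∀ t ∈ Set.Ici (0 : ℝ),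
      HasDerivWithinAt (fun u => NormedSpace.exp (A u))
        (NormedSpace.exp (A t) * ∑ i, b' t i • V i) (Set.Ici 0) t := by
  obtain ⟨h1, h2⟩ := core_thm V hnil b b' hb0 hb'cont hb A hA
  refine ⟨h1, fun t ht => ?_⟩
  exact hasDerivWithinAt_iff_tendsto_slope.mpr (h2 t ht)
end

section
/- Fix 1/2 < H < 1 and t > 0, and let f : (0, t] → ℝ^m be continuous and bounded. If for every s ∈ (0, t) one has ∫_s^t (u − s)^{H − 3/2} u^{H − 1/2} f(u) du = 0 (these improper integrals being absolutely convergent since H − 3/2 > −1), then f(u) = 0 for every u ∈ (0, t]. -/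
/-!
Put `a = H - 1/2 ∈ (0, 1/2)` and `g u = u^a f u`; the hypothesis says that
`s ↦ ∫ₛᵗ (u - s)^(a-1) g u du` vanishes on `(0, t)`. Abel's inversion trick: multiply by
`(s - r)^(-a)`, integrate over `s ∈ (r, t)` and exchange the integrals. The inner integral
`∫ᵣᵘ (s - r)^(-a) (u - s)^(a-1) ds` is homogeneous of degree `0` in `u - r`, hence equals the
constant `B(1 - a, a) > 0`, so `∫ᵣᵗ g = 0` for every `r ∈ (0, t)`. Differentiating in `r`
gives `g = 0` on `(0, t)`, and continuity extends this to `t`.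
-/

open MeasureTheory Set Filter Topology

theorem intervalIntegrable_sub_rpow_mul_sub_rpow {p q r u : ℝ} (hp : -1 < p) (hq : -1 < q)
    (hru : r < u) : IntervalIntegrable (fun s => (s - r) ^ p * (u - s) ^ q) volume r u := by
  set m := (r + u) / 2 with hm
  have hrm : r < m := by linarith
  have hmu : m < u := by linarith
  refine IntervalIntegrable.trans (b := m) ?_ ?_
  · have hleft : IntervalIntegrable (fun s => (s - r) ^ p) volume r m := by
      simpa using
        (intervalIntegral.intervalIntegrable_rpow' (a := 0) (b := m - r) hp).comp_sub_right r
    refine hleft.mul_continuousOn (ContinuousOn.rpow_const (by fun_prop) fun s hs => ?_)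
    rw [uIcc_of_le hrm.le] at hs
    exact Or.inl (by linarith [hs.2])
  · have hright : IntervalIntegrable (fun s => (u - s) ^ q) volume m u := by
      simpa using
        (intervalIntegral.intervalIntegrable_rpow' (a := u - m) (b := 0) hq).comp_sub_left u
    refine hright.continuousOn_mul (ContinuousOn.rpow_const (by fun_prop) fun s hs => ?_)
    rw [uIcc_of_le hmu.le] at hs
    exact Or.inl (by linarith [hs.1])

theorem integral_sub_rpow_mul_sub_rpow {p q r u : ℝ} (hru : r < u) :
    ∫ s in r..u, (s - r) ^ p * (u - s) ^ q =
      (u - r) ^ (p + q + 1) * ∫ x in (0 : ℝ)..1, x ^ p * (1 - x) ^ q := by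
  have hd : 0 < u - r := sub_pos.2 hru
  have hsub := intervalIntegral.integral_comp_mul_add (a := 0) (b := 1)
    (fun s => (s - r) ^ p * (u - s) ^ q) hd.ne' r
  simp only [mul_zero, zero_add, mul_one, sub_add_cancel] at hsub
  rw [eq_inv_smul_iff₀ hd.ne'] at hsub
  rw [← hsub, smul_eq_mul, ← intervalIntegral.integral_const_mul,
    ← intervalIntegral.integral_const_mul]
  refine intervalIntegral.integral_congr fun x hx => ?_
  rw [uIcc_of_le zero_le_one] at hx
  rw [add_sub_cancel_right, show u - ((u - r) * x + r) = (u - r) * (1 - x) by ring,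
    Real.mul_rpow hd.le hx.1, Real.mul_rpow hd.le (by linarith [hx.2]),
    Real.rpow_add hd, Real.rpow_add hd, Real.rpow_one]
  ring

theorem integral_rpow_mul_one_sub_rpow_pos {p q : ℝ} (hp : -1 < p) (hq : -1 < q) :
    0 < ∫ x in (0 : ℝ)..1, x ^ p * (1 - x) ^ q := by
  refine intervalIntegral.intervalIntegral_pos_of_pos_on ?_ (fun x hx => ?_) zero_lt_one
  · simpa using intervalIntegrable_sub_rpow_mul_sub_rpow (r := 0) (u := 1) hp hq zero_lt_one
  · exact mul_pos (Real.rpow_pos_of_pos hx.1 _) (Real.rpow_pos_of_pos (by linarith [hx.2]) _)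

section

variable {E : Type*} [NormedAddCommGroup E] [NormedSpace ℝ E] {a r t : ℝ} {g : ℝ → E}

noncomputable def abelIntegrand (a r : ℝ) (g : ℝ → E) : ℝ × ℝ → E :=
  {p | p.1 < p.2}.indicator fun p => ((p.1 - r) ^ (-a) * (p.2 - p.1) ^ (a - 1)) • g p.2

theorem abelIntegrand_eq_indicator_Ioi (s u : ℝ) :
    abelIntegrand a r g (s, u) =
      (Ioi s).indicator (fun u => ((s - r) ^ (-a) * (u - s) ^ (a - 1)) • g u) u := by
  by_cases h : s < u <;> simp [abelIntegrand, h]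

theorem abelIntegrand_eq_indicator_Iio (s u : ℝ) :
    abelIntegrand a r g (s, u) =
      (Iio u).indicator (fun s => ((s - r) ^ (-a) * (u - s) ^ (a - 1)) • g u) s := by
  by_cases h : s < u <;> simp [abelIntegrand, h]

theorem norm_abelIntegrand {s : ℝ} (hs : r < s) (u : ℝ) :
    ‖abelIntegrand a r g (s, u)‖ = abelIntegrand a r (fun u => ‖g u‖) (s, u) := by
  by_cases h : s < u
  · simp only [abelIntegrand_eq_indicator_Iio, indicator_of_mem (mem_Iio.2 h), norm_smul,
      smul_eq_mul]
    rw [Real.norm_of_nonneg (mul_nonneg (Real.rpow_nonneg (by linarith) _)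
      (Real.rpow_nonneg (by linarith) _))]
  · simp [abelIntegrand, h]

theorem integral_abelIntegrand_fst {s : ℝ} (hs : s ∈ Ioc r t) :
    ∫ u, abelIntegrand a r g (s, u) ∂volume.restrict (Ioc r t) =
      (s - r) ^ (-a) • ∫ u in s..t, (u - s) ^ (a - 1) • g u := by
  simp only [abelIntegrand_eq_indicator_Ioi]
  rw [integral_indicator measurableSet_Ioi, Measure.restrict_restrict measurableSet_Ioi,
    inter_comm, Ioc_inter_Ioi, sup_eq_right.2 hs.1.le, intervalIntegral.integral_of_le hs.2,
    ← integral_smul]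
  simp only [mul_smul]

theorem integral_abelIntegrand_snd [CompleteSpace E] {u : ℝ} (hu : u ∈ Ioc r t) :
    ∫ s, abelIntegrand a r g (s, u) ∂volume.restrict (Ioc r t) =
      (∫ x in (0 : ℝ)..1, x ^ (-a) * (1 - x) ^ (a - 1)) • g u := by
  have hIio : Iio u ∩ Ioc r t = Ioo r u := by
    ext x
    simp only [mem_inter_iff, mem_Iio, mem_Ioc, mem_Ioo]
    grind
  simp only [abelIntegrand_eq_indicator_Iio]
  rw [integral_indicator measurableSet_Iio, Measure.restrict_restrict measurableSet_Iio, hIio,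
    integral_smul_const, ← integral_Ioc_eq_integral_Ioo,
    ← intervalIntegral.integral_of_le hu.1.le, integral_sub_rpow_mul_sub_rpow hu.1,
    show -a + (a - 1) + 1 = 0 by ring, Real.rpow_zero, one_mul]

theorem integrable_abelIntegrand (ha0 : 0 < a) (ha1 : a < 1) (hg : IntegrableOn g (Ioc r t)) :
    Integrable (abelIntegrand a r g)
      ((volume.restrict (Ioc r t)).prod (volume.restrict (Ioc r t))) := by
  have hmeas : AEStronglyMeasurable (abelIntegrand a r g)
      ((volume.restrict (Ioc r t)).prod (volume.restrict (Ioc r t))) := by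
    have hk : Measurable fun p : ℝ × ℝ => (p.1 - r) ^ (-a) * (p.2 - p.1) ^ (a - 1) := by
      fun_prop
    exact (hk.aestronglyMeasurable.smul hg.aestronglyMeasurable.comp_snd).indicator
      (measurableSet_lt measurable_fst measurable_snd)
  refine (integrable_prod_iff' hmeas).2 ⟨?_, ?_⟩
  · refine (ae_restrict_iff' measurableSet_Ioc).2 (Eventually.of_forall fun u hu => ?_)
    simp only [abelIntegrand_eq_indicator_Iio]
    rw [integrable_indicator_iff measurableSet_Iio, IntegrableOn,
      Measure.restrict_restrict measurableSet_Iio]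
    refine Integrable.smul_const ?_ (g u)
    exact ((intervalIntegrable_sub_rpow_mul_sub_rpow (by linarith) (by linarith) hu.1).1).mono_set
      fun s hs => ⟨hs.2.1, hs.1.le⟩
  · refine (hg.norm.const_mul (∫ x in (0 : ℝ)..1, x ^ (-a) * (1 - x) ^ (a - 1))).congr
      ((ae_restrict_iff' measurableSet_Ioc).2 (Eventually.of_forall fun u hu => ?_))
    dsimp only
    rw [← smul_eq_mul, ← integral_abelIntegrand_snd (g := fun u => ‖g u‖) hu]
    exact setIntegral_congr_fun measurableSet_Ioc fun s hs => (norm_abelIntegrand hs.1 u).symm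

variable [CompleteSpace E]

theorem integral_sub_rpow_neg_smul_integral_sub_rpow_smul (ha0 : 0 < a) (ha1 : a < 1)
    (hrt : r ≤ t) (hg : IntegrableOn g (Ioc r t)) :
    ∫ s in r..t, (s - r) ^ (-a) • ∫ u in s..t, (u - s) ^ (a - 1) • g u =
      (∫ x in (0 : ℝ)..1, x ^ (-a) * (1 - x) ^ (a - 1)) • ∫ u in r..t, g u := by
  rw [intervalIntegral.integral_of_le hrt, intervalIntegral.integral_of_le hrt, ← integral_smul]
  calc ∫ s in Ioc r t, (s - r) ^ (-a) • ∫ u in s..t, (u - s) ^ (a - 1) • g u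
      = ∫ s in Ioc r t, ∫ u in Ioc r t, abelIntegrand a r g (s, u) :=
        setIntegral_congr_fun measurableSet_Ioc fun s hs => (integral_abelIntegrand_fst hs).symm
    _ = ∫ u in Ioc r t, ∫ s in Ioc r t, abelIntegrand a r g (s, u) :=
        integral_integral_swap (integrable_abelIntegrand ha0 ha1 hg)
    _ = _ := setIntegral_congr_fun measurableSet_Ioc fun u hu => integral_abelIntegrand_snd hu

theorem intervalIntegral_eq_zero_of_integral_sub_rpow_smul_eq_zero (ha0 : 0 < a) (ha1 : a < 1)
    (hrt : r ≤ t) (hg : IntegrableOn g (Ioc r t))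
    (h : ∀ s ∈ Ioo r t, ∫ u in s..t, (u - s) ^ (a - 1) • g u = 0) :
    ∫ u in r..t, g u = 0 := by
  have hB := integral_rpow_mul_one_sub_rpow_pos (p := -a) (q := a - 1) (by linarith) (by linarith)
  have habel := integral_sub_rpow_neg_smul_integral_sub_rpow_smul ha0 ha1 hrt hg
  have hzero : ∫ s in r..t, (s - r) ^ (-a) • ∫ u in s..t, (u - s) ^ (a - 1) • g u = 0 := by
    refine (intervalIntegral.integral_congr_ae (g := 0) ?_).trans intervalIntegral.integral_zero
    filter_upwards [Measure.ae_ne volume t] with s hst hs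
    rw [uIoc_of_le hrt] at hs
    simp [h s ⟨hs.1, lt_of_le_of_ne hs.2 hst⟩]
  exact (smul_eq_zero.1 (habel.symm.trans hzero)).resolve_left hB.ne'

theorem eq_zero_of_eventually_intervalIntegral_eq_zero {x b : ℝ}
    (hg : IntervalIntegrable g volume x b) (hmeas : StronglyMeasurableAtFilter g (𝓝 x))
    (hcont : ContinuousAt g x) (h : ∀ᶠ y in 𝓝 x, ∫ u in y..b, g u = 0) : g x = 0 := by
  have hderiv := intervalIntegral.integral_hasDerivAt_left hg hmeas hcont
  simpa using hderiv.unique ((hasDerivAt_const x 0).congr_of_eventuallyEq h)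

end

theorem volterra_kernel_transform_injective_general {m : ℕ}
    (H : ℝ) (hH1 : 1 / 2 < H) (hH2 : H < 1)
    (t : ℝ) (ht : 0 < t)
    (f : ℝ → Fin m → ℝ)
    (hfc : ContinuousOn f (Set.Ioc 0 t))
    (hint : ∀ s ∈ Set.Ioo (0 : ℝ) t,
      (∫ u in s..t, ((u - s) ^ (H - 3 / 2) * u ^ (H - 1 / 2)) • f u) = 0) :
    ∀ u ∈ Set.Ioc (0 : ℝ) t, f u = 0 := by
  set a := H - 1 / 2 with ha
  set g : ℝ → Fin m → ℝ := fun u => u ^ a • f u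
  have hg_cont : ContinuousOn g (Ioc 0 t) :=
    (continuousOn_id.rpow_const fun u hu => Or.inl hu.1.ne').smul hfc
  have hg_transform : ∀ s ∈ Ioo 0 t, ∫ u in s..t, (u - s) ^ (a - 1) • g u = 0 := by
    intro s hs
    rw [← hint s hs]
    refine intervalIntegral.integral_congr fun u _ => ?_
    simp only [g, a, smul_smul]
    ring_nf
  have hg_primitive : ∀ r ∈ Ioo 0 t, ∫ u in r..t, g u = 0 := fun r hr =>
    intervalIntegral_eq_zero_of_integral_sub_rpow_smul_eq_zero (by linarith) (by linarith) hr.2.le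
      ((hg_cont.mono (Icc_subset_Ioc hr.1 le_rfl)).integrableOn_Icc.mono_set Ioc_subset_Icc_self)
      fun s hs => hg_transform s ⟨hr.1.trans hs.1, hs.2⟩
  have hg_Ioo : EqOn g 0 (Ioo 0 t) := fun u hu =>
    eq_zero_of_eventually_intervalIntegral_eq_zero
      ((hg_cont.mono (Icc_subset_Ioc hu.1 le_rfl)).intervalIntegrable_of_Icc hu.2.le)
      ((hg_cont.mono Ioo_subset_Ioc_self).stronglyMeasurableAtFilter isOpen_Ioo u hu)
      (hg_cont.continuousAt (Ioc_mem_nhds hu.1 hu.2))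
      (eventually_of_mem (Ioo_mem_nhds hu.1 hu.2) hg_primitive)
  have hg_Ioc : EqOn g 0 (Ioc 0 t) :=
    hg_Ioo.of_subset_closure hg_cont continuousOn_const Ioo_subset_Ioc_self
      (by rw [closure_Ioo ht.ne]; exact Ioc_subset_Icc_self)
  intro u hu
  exact (smul_eq_zero.1 (hg_Ioc hu)).resolve_left (Real.rpow_pos_of_pos hu.1 a).ne'

/-- **Injectivity of the Volterra-kernel transform associated with fractional Brownian motion
(`1/2 < H < 1`).** If `f : (0, t] → ℝ^m` is continuous and bounded and
`∫ₛᵗ (u − s)^{H − 3/2} u^{H − 1/2} f u du = 0` for every `s ∈ (0, t)`, then `f ≡ 0` on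
`(0, t]`. -/
theorem volterra_kernel_transform_injective {m : ℕ}
    (H : ℝ) (hH1 : 1 / 2 < H) (hH2 : H < 1)
    (t : ℝ) (ht : 0 < t)
    (f : ℝ → Fin m → ℝ)
    (hfc : ContinuousOn f (Set.Ioc 0 t))
    (hfb : ∃ C : ℝ, ∀ u ∈ Set.Ioc (0 : ℝ) t, ‖f u‖ ≤ C)
    (hint : ∀ s ∈ Set.Ioo (0 : ℝ) t,
      (∫ u in s..t, ((u - s) ^ (H - 3 / 2) * u ^ (H - 1 / 2)) • f u) = 0) :
    ∀ u ∈ Set.Ioc (0 : ℝ) t, f u = 0 :=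
  volterra_kernel_transform_injective_general H hH1 hH2 t ht f hfc hint
end

section
/- Fix 1/2 < H < 1, t > 0 and a constant c_H > 0. Let A : [0, t] → M_m(ℝ) be continuous with A(u) an orthogonal matrix for every u. For s ∈ (0, t) define M(s) := ∫_s^t c_H s^{1/2 − H} (u − s)^{H − 3/2} u^{H − 1/2} A(u) du, and set Γ := ∫_0^t M(s)ᵀ M(s) ds (all integrals being absolutely convergent). Then Γ is positive definite: for every nonzero x ∈ ℝ^m, xᵀ Γ x > 0; in particular Γ is invertible. -/
/-! For `x ≠ 0`, `xᵀ Γ x = ∫₀ᵗ |M s x|² ds`, so it suffices that `M s x ≠ 0` for `s` close to `t`.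
With `w = A t x ≠ 0`, the continuous function `u ↦ wᵀ A u x` equals `|w|² > 0` at `u = t`, hence
is positive on some `[a, t]`; the kernel being positive, `wᵀ M s x > 0` for `s ∈ (a, t)`.
Integrability of `s ↦ (M s)ᵀ M s` comes from `‖M s‖ ≲ s^(1/2 - H)`, square integrable as `H < 1`. -/

open scoped Matrix

attribute [local instance] Matrix.normedAddCommGroup Matrix.normedSpace

open MeasureTheory Set Filter Topology

-- Instance search does not derive these for matrices from the local normed-group instance.
local instance {n : Type*} [Fintype n] :
    TopologicalSpace.PseudoMetrizableSpace (Matrix n n ℝ) :=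
  inferInstanceAs (TopologicalSpace.PseudoMetrizableSpace (n → n → ℝ))

noncomputable local instance {n : Type*} [Fintype n] : ENormedAddCommMonoid (Matrix n n ℝ) :=
  inferInstanceAs (ENormedAddCommMonoid (n → n → ℝ))

namespace Matrix

variable {n : Type*} [Fintype n]

noncomputable def dotProductMulVecCLM (w x : n → ℝ) : Matrix n n ℝ →L[ℝ] ℝ :=
  LinearMap.toContinuousLinearMap
    { toFun := fun B => w ⬝ᵥ B *ᵥ x
      map_add' := fun B C => by simp [add_mulVec, dotProduct_add]
      map_smul' := fun c B => by simp [smul_mulVec, dotProduct_smul] }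


theorem dotProduct_self_nonneg (v : n → ℝ) : 0 ≤ v ⬝ᵥ v := by
  simpa using dotProduct_star_self_nonneg v

theorem dotProduct_self_pos {v : n → ℝ} (hv : v ≠ 0) : 0 < v ⬝ᵥ v := by
  simpa using dotProduct_star_self_pos_iff.2 hv

theorem dotProduct_transpose_mul_self_mulVec (B : Matrix n n ℝ) (x : n → ℝ) :
    x ⬝ᵥ (Bᵀ * B) *ᵥ x = B *ᵥ x ⬝ᵥ B *ᵥ x := by
  rw [← mulVec_mulVec, dotProduct_mulVec, vecMul_transpose]

theorem norm_transpose_mul_self_le (B : Matrix n n ℝ) :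
    ‖Bᵀ * B‖ ≤ Fintype.card n * ‖B‖ ^ 2 := by
  refine (norm_le_iff (by positivity)).2 fun i j => ?_
  calc ‖(Bᵀ * B) i j‖ = |∑ k, B k i * B k j| := by simp [mul_apply]
    _ ≤ ∑ k, |B k i| * |B k j| := by
      simpa only [abs_mul] using Finset.abs_sum_le_sum_abs (fun k => B k i * B k j) Finset.univ
    _ ≤ ∑ _k : n, ‖B‖ * ‖B‖ := by
      gcongr with k
      · exact B.norm_entry_le_entrywise_sup_norm
      · exact B.norm_entry_le_entrywise_sup_norm
    _ = Fintype.card n * ‖B‖ ^ 2 := by simp [sq]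

theorem isUnit_of_forall_dotProduct_mulVec_pos [DecidableEq n] {R : Type*} [Field R]
    [Preorder R] {B : Matrix n n R} (hB : ∀ x : n → R, x ≠ 0 → 0 < x ⬝ᵥ B *ᵥ x) : IsUnit B := by
  rw [isUnit_iff_isUnit_det, isUnit_iff_ne_zero]
  intro hdet
  obtain ⟨v, hv0, hv⟩ := exists_mulVec_eq_zero_iff.2 hdet
  simpa [hv] using hB v hv0

section Integral

variable {α : Type*} [MeasurableSpace α] {μ : Measure α} {G : α → Matrix n n ℝ}

theorem integrable_dotProduct_mulVec (w x : n → ℝ) (hG : Integrable G μ) :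
    Integrable (fun a => w ⬝ᵥ G a *ᵥ x) μ :=
  (dotProductMulVecCLM w x).integrable_comp hG

theorem integral_dotProduct_mulVec (w x : n → ℝ) (hG : Integrable G μ) :
    ∫ a, w ⬝ᵥ G a *ᵥ x ∂μ = w ⬝ᵥ (∫ a, G a ∂μ) *ᵥ x :=
  (dotProductMulVecCLM w x).integral_comp_comm hG

end Integral

theorem dotProduct_intervalIntegral_smul_mulVec_pos {k : ℝ → ℝ} {A : ℝ → Matrix n n ℝ}
    {w x : n → ℝ} {s t : ℝ} (hst : s < t)
    (hint : IntervalIntegrable (fun u => k u • A u) volume s t)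
    (hpos : ∀ u ∈ Ioo s t, 0 < k u * (w ⬝ᵥ A u *ᵥ x)) :
    0 < w ⬝ᵥ (∫ u in s..t, k u • A u) *ᵥ x := by
  have hint' := (intervalIntegrable_iff_integrableOn_Ioc_of_le hst.le).1 hint
  rw [intervalIntegral.integral_of_le hst.le, ← integral_dotProduct_mulVec w x hint',
    ← intervalIntegral.integral_of_le hst.le]
  have hLint := (intervalIntegrable_iff_integrableOn_Ioc_of_le hst.le).2
    (integrable_dotProduct_mulVec w x hint')
  simp only [smul_mulVec, dotProduct_smul, smul_eq_mul] at hLint ⊢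
  exact intervalIntegral.intervalIntegral_pos_of_pos_on hLint hpos hst

end Matrix

theorem aestronglyMeasurable_intervalIntegral_of_uncurry {E : Type*} [NormedAddCommGroup E]
    [NormedSpace ℝ E] {F : ℝ → ℝ → E} {a b : ℝ}
    (hF : AEStronglyMeasurable (Function.uncurry F)
      ((volume.restrict (Ioc a b)).prod (volume.restrict (Ioc a b)))) :
    AEStronglyMeasurable (fun s => ∫ u in s..b, F s u) (volume.restrict (Ioc a b)) := by
  have hS : MeasurableSet {q : ℝ × ℝ | q.1 < q.2} := measurableSet_lt measurable_fst measurable_snd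
  refine (hF.indicator hS).integral_prod_right'.congr ?_
  filter_upwards [ae_restrict_mem measurableSet_Ioc] with s hs
  have hind : ∀ u, {q : ℝ × ℝ | q.1 < q.2}.indicator (Function.uncurry F) (s, u) =
      (Ioi s).indicator (F s) u := fun u => by
    by_cases h : s < u <;> simp [Set.indicator, h]
  have hset : Ioi s ∩ Ioc a b = Ioc s b := by
    ext u
    simp only [mem_inter_iff, mem_Ioi, mem_Ioc]
    exact ⟨fun h => ⟨h.1, h.2.2⟩, fun h => ⟨h.1, hs.1.trans h.1, h.2⟩⟩
  simp_rw [hind]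
  rw [integral_indicator measurableSet_Ioi, Measure.restrict_restrict measurableSet_Ioi, hset,
    intervalIntegral.integral_of_le hs.2]

theorem intervalIntegrable_sub_rpow {r : ℝ} (hr : -1 < r) (s t : ℝ) :
    IntervalIntegrable (fun u => (u - s) ^ r) volume s t := by
  simpa using (intervalIntegral.intervalIntegrable_rpow' (a := 0) (b := t - s) hr).comp_sub_right s

theorem integral_sub_rpow {r : ℝ} (hr : -1 < r) (s t : ℝ) :
    ∫ u in s..t, (u - s) ^ r = (t - s) ^ (r + 1) / (r + 1) := by
  rw [intervalIntegral.integral_comp_sub_right (fun u => u ^ r), sub_self,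
    integral_rpow (Or.inl hr), Real.zero_rpow (by linarith), sub_zero]

theorem setIntegral_Ioo_pos_of_eventually_pos {f : ℝ → ℝ} {a b : ℝ} (hab : a < b)
    (hf : IntegrableOn f (Ioo a b)) (hf0 : ∀ s ∈ Ioo a b, 0 ≤ f s)
    (hpos : ∀ᶠ s in 𝓝[<] b, 0 < f s) :
    0 < ∫ s in Ioo a b, f s := by
  rw [setIntegral_pos_iff_support_of_nonneg_ae
    ((ae_restrict_iff' measurableSet_Ioo).2 (.of_forall hf0)) hf]
  have hmem : Function.support f ∩ Ioo a b ∈ 𝓝[<] b :=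
    inter_mem (hpos.mono fun _ h => h.ne') (Ioo_mem_nhdsLT hab)
  obtain ⟨c, hcb, hc⟩ := mem_nhdsLT_iff_exists_Ioo_subset.1 hmem
  calc (0 : ENNReal) < volume (Ioo c b) := by simpa using hcb
    _ ≤ _ := measure_mono hc

noncomputable def fbmKernel (H cH s u : ℝ) : ℝ :=
  cH * s ^ ((1 : ℝ) / 2 - H) * (u - s) ^ (H - 3 / 2) * u ^ (H - 1 / 2)

section fbmKernel

variable {H cH s t : ℝ}

theorem measurable_fbmKernel (H cH : ℝ) : Measurable (Function.uncurry (fbmKernel H cH)) := by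
  unfold fbmKernel Function.uncurry
  fun_prop

theorem fbmKernel_pos (hcH : 0 < cH) {u : ℝ} (hs : 0 < s) (hsu : s < u) :
    0 < fbmKernel H cH s u := by
  have : 0 < u - s := sub_pos.2 hsu
  have : 0 < u := hs.trans hsu
  unfold fbmKernel
  positivity

theorem abs_fbmKernel_le (hH : 1 / 2 < H) (hcH : 0 ≤ cH) {u : ℝ} (hs : 0 < s)
    (hu : u ∈ Icc s t) :
    |fbmKernel H cH s u| ≤
      cH * s ^ ((1 : ℝ) / 2 - H) * t ^ (H - 1 / 2) * (u - s) ^ (H - 3 / 2) := by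
  have hus : 0 ≤ u - s := sub_nonneg.2 hu.1
  have hu0 : 0 ≤ u := hs.le.trans hu.1
  unfold fbmKernel
  rw [abs_of_nonneg (by positivity), mul_right_comm _ (t ^ _)]
  gcongr
  exact hu.2

theorem intervalIntegrable_fbmKernel (hH : 1 / 2 < H) (cH s t : ℝ) :
    IntervalIntegrable (fbmKernel H cH s) volume s t := by
  have hcont : Continuous fun u : ℝ => u ^ (H - 1 / 2) := Real.continuous_rpow_const (by linarith)
  convert ((intervalIntegrable_sub_rpow (r := H - 3 / 2) (by linarith) s t).mul_continuousOn
    hcont.continuousOn).const_mul (cH * s ^ ((1 : ℝ) / 2 - H)) using 1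
  ext u
  simp only [fbmKernel, mul_assoc]

variable {n : Type*} [Fintype n] {A : ℝ → Matrix n n ℝ}

theorem intervalIntegrable_fbmKernel_smul (hH : 1 / 2 < H) (hA : ContinuousOn A (Icc 0 t))
    (hs : 0 ≤ s) (hst : s ≤ t) :
    IntervalIntegrable (fun u => fbmKernel H cH s u • A u) volume s t :=
  (intervalIntegrable_fbmKernel hH cH s t).smul_continuousOn
    (hA.mono (by rw [uIcc_of_le hst]; exact Icc_subset_Icc_left hs))

theorem norm_intervalIntegral_fbmKernel_smul_le (hH : 1 / 2 < H) (hcH : 0 ≤ cH) {C : ℝ}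
    (hA : ∀ u ∈ Icc 0 t, ‖A u‖ ≤ C) (hs : 0 < s) (hst : s ≤ t) :
    ‖∫ u in s..t, fbmKernel H cH s u • A u‖ ≤
      cH * C * (t ^ (H - 1 / 2)) ^ 2 / (H - 1 / 2) * s ^ ((1 : ℝ) / 2 - H) := by
  have ht : 0 ≤ t := hs.le.trans hst
  have hC : 0 ≤ C := (norm_nonneg _).trans (hA t ⟨ht, le_rfl⟩)
  set D := cH * s ^ ((1 : ℝ) / 2 - H) * t ^ (H - 1 / 2) * C
  have hD : 0 ≤ D := by positivity
  have hbound : ∀ u ∈ Ioc s t, ‖fbmKernel H cH s u • A u‖ ≤ D * (u - s) ^ (H - 3 / 2) := by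
    intro u hu
    have : 0 ≤ u - s := sub_nonneg.2 hu.1.le
    rw [norm_smul, Real.norm_eq_abs]
    calc |fbmKernel H cH s u| * ‖A u‖
        ≤ cH * s ^ ((1 : ℝ) / 2 - H) * t ^ (H - 1 / 2) * (u - s) ^ (H - 3 / 2) * C :=
          mul_le_mul (abs_fbmKernel_le hH hcH hs (Ioc_subset_Icc_self hu))
            (hA u ⟨hs.le.trans hu.1.le, hu.2⟩) (norm_nonneg _) (by positivity)
      _ = D * (u - s) ^ (H - 3 / 2) := by ring
  calc ‖∫ u in s..t, fbmKernel H cH s u • A u‖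
      ≤ ∫ u in s..t, D * (u - s) ^ (H - 3 / 2) :=
        intervalIntegral.norm_integral_le_of_norm_le hst (.of_forall hbound)
          ((intervalIntegrable_sub_rpow (by linarith) s t).const_mul D)
    _ = D * ((t - s) ^ (H - 1 / 2) / (H - 1 / 2)) := by
        rw [intervalIntegral.integral_const_mul, integral_sub_rpow (by linarith) s t,
          show H - 3 / 2 + 1 = H - 1 / 2 by ring]
    _ ≤ D * (t ^ (H - 1 / 2) / (H - 1 / 2)) := by
        have : 0 < H - 1 / 2 := by linarith
        gcongr
        linarith
    _ = cH * C * (t ^ (H - 1 / 2)) ^ 2 / (H - 1 / 2) * s ^ ((1 : ℝ) / 2 - H) := by ring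

theorem aestronglyMeasurable_intervalIntegral_fbmKernel_smul (hA : ContinuousOn A (Icc 0 t)) :
    AEStronglyMeasurable (fun s => ∫ u in s..t, fbmKernel H cH s u • A u)
      (volume.restrict (Ioc 0 t)) := by
  have hA' : AEStronglyMeasurable A (volume.restrict (Ioc 0 t)) :=
    (hA.aestronglyMeasurable measurableSet_Icc).mono_measure
      (Measure.restrict_mono Ioc_subset_Icc_self le_rfl)
  exact aestronglyMeasurable_intervalIntegral_of_uncurry
    ((measurable_fbmKernel H cH).aestronglyMeasurable.smul hA'.comp_snd)

end fbmKernel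

theorem integrableOn_transpose_mul_self_of_norm_le_rpow {n : Type*} [Fintype n]
    {M : ℝ → Matrix n n ℝ} {K r t : ℝ} (hr : -1 / 2 < r)
    (hM : AEStronglyMeasurable M (volume.restrict (Ioo 0 t)))
    (hbound : ∀ s ∈ Ioo 0 t, ‖M s‖ ≤ K * s ^ r) :
    IntegrableOn (fun s => (M s)ᵀ * M s) (Ioo 0 t) := by
  have hmaj : IntegrableOn (fun s : ℝ => Fintype.card n * K ^ 2 * s ^ (2 * r)) (Ioo 0 t) :=
    (((intervalIntegral.intervalIntegrable_rpow' (a := 0) (b := t) (r := 2 * r)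
      (by linarith)).const_mul (Fintype.card n * K ^ 2)).1).mono_set Ioo_subset_Ioc_self
  refine hmaj.mono'
    ((continuous_id.matrix_transpose.matrix_mul continuous_id).comp_aestronglyMeasurable hM) ?_
  filter_upwards [ae_restrict_mem measurableSet_Ioo] with s hs
  calc ‖(M s)ᵀ * M s‖ ≤ Fintype.card n * ‖M s‖ ^ 2 := Matrix.norm_transpose_mul_self_le _
    _ ≤ Fintype.card n * (K * s ^ r) ^ 2 := by gcongr; exact hbound s hs
    _ = Fintype.card n * K ^ 2 * s ^ (2 * r) := by
      rw [mul_pow, ← Real.rpow_natCast (s ^ r), ← Real.rpow_mul hs.1.le]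
      ring_nf

theorem eventually_mulVec_intervalIntegral_fbmKernel_smul_ne_zero {n : Type*} [Fintype n]
    {H cH t : ℝ} {A : ℝ → Matrix n n ℝ} {x : n → ℝ} (hH : 1 / 2 < H) (hcH : 0 < cH)
    (ht : 0 < t) (hA : ContinuousOn A (Icc 0 t)) (hAx : A t *ᵥ x ≠ 0) :
    ∀ᶠ s in 𝓝[<] t, (∫ u in s..t, fbmKernel H cH s u • A u) *ᵥ x ≠ 0 := by
  set w := A t *ᵥ x
  have hψ : ∀ᶠ u in 𝓝[≤] t, 0 < w ⬝ᵥ A u *ᵥ x := by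
    have hcont : ContinuousWithinAt (fun u => w ⬝ᵥ A u *ᵥ x) (Icc 0 t) t :=
      (Matrix.dotProductMulVecCLM w x).continuous.comp_continuousOn hA t
        (right_mem_Icc.2 ht.le)
    rw [← nhdsWithin_Icc_eq_nhdsLE ht]
    exact hcont.eventually (eventually_gt_nhds (Matrix.dotProduct_self_pos hAx))
  obtain ⟨a, hat, ha⟩ := mem_nhdsLE_iff_exists_Ioc_subset.1 hψ
  filter_upwards [Ioo_mem_nhdsLT (max_lt hat ht)] with s hs hzero
  have hs0 : 0 < s := (le_max_right _ _).trans_lt hs.1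
  have hpos := Matrix.dotProduct_intervalIntegral_smul_mulVec_pos (w := w) hs.2
    (intervalIntegrable_fbmKernel_smul hH hA hs0.le hs.2.le)
    fun u hu => mul_pos (fbmKernel_pos hcH hs0 hu.1)
      (ha ⟨(le_max_left _ _).trans_lt (hs.1.trans hu.1), hu.2.le⟩)
  rw [hzero, dotProduct_zero] at hpos
  exact hpos.false

/-- **Positive definiteness of the Malliavin matrix of fractional Brownian motion on a compact
Lie group (`1/2 < H < 1`).** With `A u` orthogonal for `u ∈ [0,t]` (playing the role of
`Ad_{X_u}`), `M s = ∫ₛᵗ c_H s^{1/2−H} (u−s)^{H−3/2} u^{H−1/2} A u du` and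
`Γ = ∫₀ᵗ (M s)ᵀ M s ds`, the matrix `Γ` is positive definite, in particular invertible. -/
theorem malliavin_matrix_pos_def {m : ℕ}
    (H : ℝ) (hH1 : 1 / 2 < H) (hH2 : H < 1)
    (t : ℝ) (ht : 0 < t) (cH : ℝ) (hcH : 0 < cH)
    (A : ℝ → Matrix (Fin m) (Fin m) ℝ)
    (hAc : ContinuousOn A (Set.Icc 0 t))
    (hAorth : ∀ u ∈ Set.Icc (0 : ℝ) t, (A u)ᵀ * A u = 1)
    (M : ℝ → Matrix (Fin m) (Fin m) ℝ)
    (hM : ∀ s ∈ Set.Ioo (0 : ℝ) t,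
      M s = ∫ u in s..t,
        (cH * s ^ ((1 : ℝ) / 2 - H) * (u - s) ^ (H - 3 / 2) * u ^ (H - 1 / 2)) • A u)
    (Γ : Matrix (Fin m) (Fin m) ℝ)
    (hΓ : Γ = ∫ s in (0 : ℝ)..t, (M s)ᵀ * M s) :
    (∀ x : Fin m → ℝ, x ≠ 0 → 0 < x ⬝ᵥ Γ.mulVec x) ∧ IsUnit Γ := by
  obtain ⟨C, hC⟩ := isCompact_Icc.exists_bound_of_continuousOn hAc
  have hMmeas : AEStronglyMeasurable M (volume.restrict (Ioo 0 t)) :=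
    ((aestronglyMeasurable_intervalIntegral_fbmKernel_smul hAc).mono_measure
      (Measure.restrict_mono Ioo_subset_Ioc_self le_rfl)).congr
      ((ae_restrict_iff' measurableSet_Ioo).2 (.of_forall fun s hs => (hM s hs).symm))
  have hGint : IntegrableOn (fun s => (M s)ᵀ * M s) (Ioo 0 t) :=
    integrableOn_transpose_mul_self_of_norm_le_rpow (by linarith) hMmeas fun s hs =>
      (hM s hs).symm ▸ norm_intervalIntegral_fbmKernel_smul_le hH1 hcH.le hC hs.1 hs.2.le
  have hΓ' : Γ = ∫ s in Ioo 0 t, (M s)ᵀ * M s := by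
    rw [hΓ, intervalIntegral.integral_of_le ht.le, integral_Ioc_eq_integral_Ioo]
  have hpos : ∀ x : Fin m → ℝ, x ≠ 0 → 0 < x ⬝ᵥ Γ *ᵥ x := by
    intro x hx
    have hAx : A t *ᵥ x ≠ 0 := fun h => hx <| by
      rw [← Matrix.one_mulVec x, ← hAorth t (right_mem_Icc.2 ht.le), ← Matrix.mulVec_mulVec, h,
        Matrix.mulVec_zero]
    rw [hΓ', ← Matrix.integral_dotProduct_mulVec x x hGint]
    simp only [Matrix.dotProduct_transpose_mul_self_mulVec]
    refine setIntegral_Ioo_pos_of_eventually_pos ht ?_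
      (fun s _ => Matrix.dotProduct_self_nonneg _) ?_
    · simpa only [Matrix.dotProduct_transpose_mul_self_mulVec, IntegrableOn] using
        Matrix.integrable_dotProduct_mulVec x x hGint
    · filter_upwards [eventually_mulVec_intervalIntegral_fbmKernel_smul_ne_zero hH1 hcH ht hAc hAx,
        Ioo_mem_nhdsLT ht] with s hs hs0
      exact Matrix.dotProduct_self_pos (hM s hs0 ▸ hs)
  exact ⟨hpos, Matrix.isUnit_of_forall_dotProduct_mulVec_pos hpos⟩
end
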